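/- arXiv:1203.4851 — 2 statements merged into one kernel-verified Lean document; each statement's English description precedes it below -/
import Mathlib

section
/- Let p₁₂ : [0,1] → ℝ be continuous, u₁(x) = exp(∫₀ˣ p₁₂), α* ∈ ℝ, and w(x) = 1 + α*∫₀ˣ u₁², assumed positive on [0,1]. Define p̃₁₂ = p₁₂ - (log w)'. Then -p̃₁₂' + p̃₁₂² = -p₁₂' + p₁₂² on [0,1]. -/
theorem darboux_miura_invariance (p₁₂ : ℝ → ℝ) (hp : Continuous p₁₂)
    (hp' : Differentiable ℝ p₁₂) (αstar : ℝ) (u₁ w pt₁₂ : ℝ → ℝ)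
    (hu₁ : ∀ x, u₁ x = Real.exp (∫ t in (0:ℝ)..x, p₁₂ t))
    (hw : ∀ x, w x = 1 + αstar * ∫ t in (0:ℝ)..x, (u₁ t) ^ 2)
    (hwpos : ∀ x ∈ Set.Icc (0:ℝ) 1, 0 < w x)
    (hpt : ∀ x, pt₁₂ x = p₁₂ x - deriv (fun t => Real.log (w t)) x) :
    ∀ x ∈ Set.Icc (0:ℝ) 1,
      -deriv pt₁₂ x + (pt₁₂ x) ^ 2 = -deriv p₁₂ x + (p₁₂ x) ^ 2 := by
  -- derivative of the primitive of p₁₂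
  have hI : ∀ x : ℝ, HasDerivAt (fun y => ∫ t in (0:ℝ)..y, p₁₂ t) (p₁₂ x) x := by
    intro x
    exact intervalIntegral.integral_hasDerivAt_right (hp.intervalIntegrable 0 x)
      (hp.stronglyMeasurableAtFilter _ _) hp.continuousAt
  -- derivative of u₁
  have hu : ∀ x : ℝ, HasDerivAt u₁ (u₁ x * p₁₂ x) x := by
    intro x
    have h := (hI x).exp
    have : u₁ = fun y => Real.exp (∫ t in (0:ℝ)..y, p₁₂ t) := funext hu₁
    rw [this]
    simpa [hu₁] using h
  have hu₁cont : Continuous u₁ := by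
    have : Differentiable ℝ u₁ := fun x => (hu x).differentiableAt
    exact this.continuous
  -- derivative of w
  have hwd : ∀ x : ℝ, HasDerivAt w (αstar * u₁ x ^ 2) x := by
    intro x
    have hc : Continuous fun t => u₁ t ^ 2 := hu₁cont.pow 2
    have h := intervalIntegral.integral_hasDerivAt_right (hc.intervalIntegrable 0 x)
      (hc.stronglyMeasurableAtFilter _ _) hc.continuousAt
    have h2 := (h.const_mul αstar).const_add 1
    have : w = fun y => 1 + αstar * ∫ t in (0:ℝ)..y, u₁ t ^ 2 := funext hw
    rw [this]
    exact h2
  have hwcont : Continuous w := by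
    exact Differentiable.continuous (fun x => (hwd x).differentiableAt)
  intro x hx
  have hwx : 0 < w x := hwpos x hx
  set g : ℝ → ℝ := fun t => αstar * u₁ t ^ 2 / w t with hg_def
  -- log derivative on the positivity set
  have hlog : ∀ t : ℝ, 0 < w t → HasDerivAt (fun s => Real.log (w s)) (g t) t := by
    intro t ht
    exact (hwd t).log ht.ne'
  have heq : ∀ t : ℝ, 0 < w t → deriv (fun s => Real.log (w s)) t = g t :=
    fun t ht => (hlog t ht).deriv
  have hS : IsOpen {t : ℝ | 0 < w t} := isOpen_lt continuous_const hwcont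
  have hmem : {t : ℝ | 0 < w t} ∈ nhds x := hS.mem_nhds hwx
  have hpt_eq : pt₁₂ =ᶠ[nhds x] fun t => p₁₂ t - g t := by
    filter_upwards [hmem] with t ht
    rw [hpt t, heq t ht]
  -- derivative of g at x
  have hg : HasDerivAt g ((αstar * (2 * u₁ x ^ 1 * (u₁ x * p₁₂ x)) * w x
      - αstar * u₁ x ^ 2 * (αstar * u₁ x ^ 2)) / w x ^ 2) x := by
    exact (((hu x).pow 2).const_mul αstar).div (hwd x) hwx.ne'
  have hderiv_pt : deriv pt₁₂ x = deriv p₁₂ x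
      - ((αstar * (2 * u₁ x ^ 1 * (u₁ x * p₁₂ x)) * w x
      - αstar * u₁ x ^ 2 * (αstar * u₁ x ^ 2)) / w x ^ 2) := by
    rw [hpt_eq.deriv_eq]
    exact (((hp' x).hasDerivAt).sub hg).deriv
  have hptx : pt₁₂ x = p₁₂ x - g x := by rw [hpt x, heq x hwx]
  rw [hderiv_pt, hptx, hg_def]
  field_simp
  ring
end

section
/- Conversely, let v, p : [0,1] → ℝ with v differentiable, q = v' + v², λ ≠ 0, and let y be a twice differentiable solution of -y'' + qy + 2λpy = λ²y. Then u₂ := y and u₁ := (y' - vy)/λ satisfy the Dirac system u₂' - v u₂ = λu₁ and -u₁' - v u₁ + 2p u₂ = λ u₂. -/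
theorem energy_dependent_SL_to_dirac_system
    (v p y q : ℝ → ℝ) (hv : Differentiable ℝ v)
    (hy : Differentiable ℝ y) (hy' : Differentiable ℝ (deriv y))
    (hq : ∀ x, q x = deriv v x + (v x) ^ 2)
    (l : ℝ) (hl : l ≠ 0)
    (heq : ∀ x, -deriv (deriv y) x + q x * y x + 2 * l * p x * y x = l ^ 2 * y x) :
    let u₁ : ℝ → ℝ := fun x => (deriv y x - v x * y x) / l
    let u₂ : ℝ → ℝ := y
    (∀ x, deriv u₂ x - v x * u₂ x = l * u₁ x) ∧
    (∀ x, -deriv u₁ x - v x * u₁ x + 2 * p x * u₂ x = l * u₂ x) := by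
  intro u₁ u₂
  have hder : ∀ x, deriv u₁ x =
      (deriv (deriv y) x - (deriv v x * y x + v x * deriv y x)) / l := by
    intro x
    have h1 : HasDerivAt (fun x => deriv y x - v x * y x)
        (deriv (deriv y) x - (deriv v x * y x + v x * deriv y x)) x :=
      ((hy'.differentiableAt.hasDerivAt).sub
        ((hv.differentiableAt.hasDerivAt).mul (hy.differentiableAt.hasDerivAt)))
    exact (h1.div_const l).deriv
  constructor
  · intro x
    show deriv y x - v x * y x = l * ((deriv y x - v x * y x) / l)
    field_simp
  · intro x
    have h := heq x
    rw [hq x] at h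
    rw [hder x]
    show -((deriv (deriv y) x - (deriv v x * y x + v x * deriv y x)) / l) -
        v x * ((deriv y x - v x * y x) / l) + 2 * p x * y x = l * y x
    field_simp
    nlinarith [h]
end
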